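/- arXiv:2506.12018 — 2 statements merged into one kernel-verified Lean document; each statement's English description precedes it below -/
import Mathlib

section
/- Let A be a unital C*-algebra and μ, λ positive linear functionals on A with N_λ ⊆ N_μ, where N_τ = {a : τ(a*a) = 0}. Let π_λ be the GNS representation of λ. Then there is a well-defined positive linear functional μ' on the C*-algebra π_λ(A) satisfying μ'(π_λ(a)) = μ(a) for all a ∈ A, and ‖μ'‖ = ‖μ‖. -/
/-!
The point is the estimate `‖μ a‖ ≤ ‖μ‖ * ‖π_λ a‖`. Cauchy–Schwarz for `μ` gives
`|μ a|² ≤ μ 1 · μ (a⋆a)`. For `c = a⋆a - ‖π_λ a‖²`, the representation kills the positive part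
`c⁺ = e⋆e`, so `e ∈ N_λ ⊆ N_μ` and `μ c = -μ c⁻ ≤ 0`, i.e. `μ (a⋆a) ≤ ‖π_λ a‖² μ 1`.
Hence `μ` factors through `π_λ(A)` with norm at most `‖μ‖`; the reverse inequality holds
because `π_λ` is contractive.
-/

open ComplexOrder

namespace PositiveLinearMap

variable {A B : Type*} [CStarAlgebra A] [PartialOrder A] [StarOrderedRing A]

lemma norm_apply_sq_le (f : A →ₚ[ℂ] ℂ) (a : A) :
    ‖f a‖ ^ 2 ≤ ‖f 1‖ * ‖f (star a * a)‖ := by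
  have h := norm_inner_le_norm (𝕜 := ℂ) (f.toPreGNS 1) (f.toPreGNS a)
  rw [preGNS_inner_def] at h
  have h1 := congrArg norm (f.preGNS_norm_sq (f.toPreGNS 1))
  have h2 := congrArg norm (f.preGNS_norm_sq (f.toPreGNS a))
  simp only [ofPreGNS_toPreGNS, star_one, one_mul, Complex.norm_pow, Complex.norm_real,
    norm_norm] at h h1 h2
  rw [← h1, ← h2, ← mul_pow]
  gcongr

variable [CStarAlgebra B] [PartialOrder B] [StarOrderedRing B]

lemma apply_le_of_map_eq_zero (f : A →ₚ[ℂ] ℂ) (φ : A →⋆ₐ[ℂ] B)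
    (hf : ∀ e, φ e = 0 → f (star e * e) = 0) {c : A} (hc : IsSelfAdjoint c) :
    f c ≤ f (algebraMap ℝ A ‖φ c‖) := by
  set d := c - algebraMap ℝ A ‖φ c‖
  have hd : IsSelfAdjoint d := hc.sub (.algebraMap A (.all _))
  have hφd : φ d ≤ 0 := by
    rw [map_sub, sub_nonpos, IsScalarTower.algebraMap_apply ℝ ℂ A, AlgHomClass.commutes,
      ← IsScalarTower.algebraMap_apply]
    exact (hc.map φ).le_algebraMap_norm_self
  have hφd_pos : φ d⁺ = 0 := by
    rw [CFC.posPart_def, NonUnitalStarAlgHomClass.map_cfcₙ φ (·⁺ : ℝ → ℝ) d (hφa := hd.map φ),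
      ← CFC.posPart_def, CFC.posPart_eq_zero_iff _ (hd.map φ)]
    exact hφd
  obtain ⟨e, he⟩ := CStarAlgebra.nonneg_iff_eq_star_mul_self.mp (CFC.posPart_nonneg d)
  have hφe : φ e = 0 := by
    rw [← CStarRing.star_mul_self_eq_zero_iff, ← map_star, ← map_mul, ← he, hφd_pos]
  have hfd : f d ≤ 0 := by
    rw [← CFC.posPart_sub_negPart d, map_sub, he, hf e hφe, zero_sub, neg_nonpos]
    exact f.map_nonneg (CFC.negPart_nonneg d)
  simpa [d, sub_nonpos] using hfd

lemma norm_apply_le_of_map_eq_zero (f : A →ₚ[ℂ] ℂ) (φ : A →⋆ₐ[ℂ] B)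
    (hf : ∀ e, φ e = 0 → f (star e * e) = 0) (a : A) :
    ‖f a‖ ≤ ‖f 1‖ * ‖φ a‖ := by
  have hdom : ‖f (star a * a)‖ ≤ ‖φ a‖ ^ 2 * ‖f 1‖ := by
    have h := f.apply_le_of_map_eq_zero φ hf (IsSelfAdjoint.star_mul_self a)
    rw [Algebra.algebraMap_eq_smul_one, map_smul_of_tower] at h
    have := CStarAlgebra.norm_le_norm_of_nonneg_of_le (f.map_nonneg (star_mul_self_nonneg a)) h
    rwa [norm_smul, norm_norm, map_mul φ, map_star φ, CStarRing.norm_star_mul_self, ← sq] at this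
  refine le_of_pow_le_pow_left₀ two_ne_zero (by positivity) ?_
  calc ‖f a‖ ^ 2 ≤ ‖f 1‖ * ‖f (star a * a)‖ := f.norm_apply_sq_le a
    _ ≤ ‖f 1‖ * (‖φ a‖ ^ 2 * ‖f 1‖) := by gcongr
    _ = (‖f 1‖ * ‖φ a‖) ^ 2 := by ring

end PositiveLinearMap

namespace LinearMap

variable {𝕜 E F G : Type*} [NontriviallyNormedField 𝕜] [AddCommGroup E] [Module 𝕜 E]
  [SeminormedAddCommGroup F] [NormedSpace 𝕜 F] [NormedAddCommGroup G] [NormedSpace 𝕜 G]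

lemma exists_continuous_comp_rangeRestrict_eq (φ : E →ₗ[𝕜] F) (f : E →ₗ[𝕜] G) {C : ℝ}
    (hC : 0 ≤ C) (hf : ∀ x, ‖f x‖ ≤ C * ‖φ x‖) :
    ∃ g : range φ →L[𝕜] G, (∀ x, g (φ.rangeRestrict x) = f x) ∧ ‖g‖ ≤ C := by
  have hker : ker φ ≤ ker f := fun x hx ↦
    mem_ker.mpr <| norm_le_zero_iff.mp <| by simpa [mem_ker.mp hx] using hf x
  set g := (ker φ).liftQ f hker ∘ₗ φ.quotKerEquivRange.symm.toLinearMap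
  have hg : ∀ x, g (φ.rangeRestrict x) = f x := fun x ↦ by
    change (ker φ).liftQ f hker (φ.quotKerEquivRange.symm ⟨φ x, mem_range_self φ x⟩) = f x
    rw [quotKerEquivRange_symm_apply_image]
    rfl
  have hbound : ∀ y, ‖g y‖ ≤ C * ‖y‖ := by
    rintro ⟨_, x, rfl⟩
    exact (hg x).symm ▸ hf x
  exact ⟨g.mkContinuous C hbound, hg, g.mkContinuous_norm_le hC hbound⟩

end LinearMap

theorem transfer_functional_exists_general
    {A : Type*} [NormedRing A] [StarRing A] [CStarRing A] [CompleteSpace A]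
    [NormedAlgebra ℂ A] [StarModule ℂ A] [NormOneClass A]
    (lam μ : A →L[ℂ] ℂ)
    (hμ : ∀ a : A, 0 ≤ μ (star a * a))
    (hN : ∀ a : A, lam (star a * a) = 0 → μ (star a * a) = 0)
    -- the GNS representation of `lam`:
    (H : Type*) [NormedAddCommGroup H] [InnerProductSpace ℂ H] [CompleteSpace H]
    (rep : A →⋆ₐ[ℂ] (H →L[ℂ] H)) (xi : H)
    (hstate : ∀ a : A, lam a = inner (𝕜 := ℂ) xi (rep a xi)) :
    ∃ μ' : (LinearMap.range rep.toLinearMap : Submodule ℂ (H →L[ℂ] H)) →L[ℂ] ℂ,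
      (∀ a : A, μ' ⟨rep a, ⟨a, rfl⟩⟩ = μ a) ∧
      (∀ a : A, 0 ≤ μ' ⟨rep (star a * a), ⟨star a * a, rfl⟩⟩) ∧
      ‖μ'‖ = ‖μ‖ := by
  let : CStarAlgebra A :=
    { ‹NormedRing A›, ‹StarRing A›, ‹CStarRing A›, ‹NormedAlgebra ℂ A›, ‹StarModule ℂ A› with
      toCompleteSpace := ‹_› }
  let := CStarAlgebra.spectralOrder A
  let := CStarAlgebra.spectralOrderedRing A
  let μpos : A →ₚ[ℂ] ℂ := .mk₀ μ fun x hx ↦ by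
    obtain ⟨s, rfl⟩ := CStarAlgebra.nonneg_iff_eq_star_mul_self.mp hx
    exact hμ s
  have hker : ∀ e, rep e = 0 → μpos (star e * e) = 0 := fun e he ↦
    hN e (by simp [hstate, he])
  have hμ1 : ‖μ 1‖ ≤ ‖μ‖ := by simpa using μ.le_opNorm 1
  have hbound : ∀ a, ‖μ a‖ ≤ ‖μ‖ * ‖rep a‖ := fun a ↦
    (μpos.norm_apply_le_of_map_eq_zero rep hker a).trans <|
      mul_le_mul_of_nonneg_right hμ1 (norm_nonneg _)
  obtain ⟨μ', hμ', hle⟩ := rep.toLinearMap.exists_continuous_comp_rangeRestrict_eq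
    (μ : A →ₗ[ℂ] ℂ) (norm_nonneg μ) hbound
  refine ⟨μ', hμ', fun a ↦ (hμ' _).symm ▸ hμ a, le_antisymm hle ?_⟩
  refine μ.opNorm_le_bound (norm_nonneg μ') fun a ↦ ?_
  calc ‖μ a‖ = ‖μ' (rep.toLinearMap.rangeRestrict a)‖ := by rw [hμ']; rfl
    _ ≤ ‖μ'‖ * ‖rep a‖ := μ'.le_opNorm _
    _ ≤ ‖μ'‖ * ‖a‖ := by gcongr; exact NonUnitalStarAlgHom.norm_apply_le rep a

/-- Let `μ`, `lam` be positive linear functionals on a unital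
C*-algebra `A` with `N_lam ⊆ N_μ`, and let `π_lam` (given by the Hilbert space
`H = L²(lam)`, the star representation `rep` and the cyclic vector `xi = 1 + N_lam`)
be the GNS representation of `lam`.  Then there is a well-defined positive
linear functional `μ'` on the C*-algebra `π_lam (A)` satisfying
`μ' (π_lam a) = μ a` for all `a ∈ A`, and `‖μ'‖ = ‖μ‖`. -/
theorem transfer_functional_exists
    {A : Type*} [NormedRing A] [StarRing A] [CStarRing A] [CompleteSpace A]
    [NormedAlgebra ℂ A] [StarModule ℂ A] [NormOneClass A]
    (lam μ : A →L[ℂ] ℂ)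
    (hlam : ∀ a : A, 0 ≤ lam (star a * a)) (hμ : ∀ a : A, 0 ≤ μ (star a * a))
    (hN : ∀ a : A, lam (star a * a) = 0 → μ (star a * a) = 0)
    -- the GNS representation of `lam`:
    (H : Type*) [NormedAddCommGroup H] [InnerProductSpace ℂ H] [CompleteSpace H]
    (rep : A →⋆ₐ[ℂ] (H →L[ℂ] H)) (xi : H)
    (hstate : ∀ a : A, lam a = inner (𝕜 := ℂ) xi (rep a xi))
    (hcyclic : (Submodule.span ℂ (Set.range fun a : A => rep a xi)).topologicalClosure = ⊤) :
    ∃ μ' : (LinearMap.range rep.toLinearMap : Submodule ℂ (H →L[ℂ] H)) →L[ℂ] ℂ,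
      (∀ a : A, μ' ⟨rep a, ⟨a, rfl⟩⟩ = μ a) ∧
      (∀ a : A, 0 ≤ μ' ⟨rep (star a * a), ⟨star a * a, rfl⟩⟩) ∧
      ‖μ'‖ = ‖μ‖ :=
  transfer_functional_exists_general lam μ hμ hN H rep xi hstate
end

section
/- Let λ be a positive linear functional on a unital C*-algebra A. The set WS[λ] of positive linear functionals on A that are weak*-singular with respect to λ is a hereditary cone in the positive cone of A*: if 0 ≤ ν ≤ μ and μ ∈ WS[λ], then ν ∈ WS[λ]. -/
open ComplexOrder

variable {A : Type*} [NormedRing A] [StarRing A] [CStarRing A] [CompleteSpace A]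
  [NormedAlgebra ℂ A] [StarModule ℂ A] [NormOneClass A]
  {H : Type*} [NormedAddCommGroup H] [InnerProductSpace ℂ H] [CompleteSpace H]

/-- A linear functional on a C*-algebra is positive if it is nonnegative on
elements of the form `a* a`. -/
def IsPosPLF (μ : A →L[ℂ] ℂ) : Prop := ∀ a : A, 0 ≤ μ (star a * a)

/-- The order on (positive) linear functionals: `μ ≤ ν`. -/
def PLFLe (μ ν : A →L[ℂ] ℂ) : Prop := ∀ a : A, 0 ≤ ν (star a * a) - μ (star a * a)

/-- `(rep, H, xi)` is the GNS representation of the positive linear functional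
`lam`: `lam` is the vector state at the cyclic vector `xi = 1 + N_lam`. -/
def IsGNSRep (lam : A →L[ℂ] ℂ) (rep : A →⋆ₐ[ℂ] (H →L[ℂ] H)) (xi : H) : Prop :=
  (∀ a : A, lam a = inner (𝕜 := ℂ) xi (rep a xi)) ∧
  (Submodule.span ℂ (Set.range fun a : A => rep a xi)).topologicalClosure = ⊤

/-- `μ` is weak*-continuous with respect to `lam` (whose GNS representation on
`H = L²(lam)` is `rep`): `μ` extends to a weak*-continuous (normal) positive
linear functional on the von Neumann algebra `L^∞(lam) = rep(A)''`,
equivalently `μ` is given by a square-summable sequence of vectors of `L²(lam)`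
via `μ a = ∑ₖ ⟪ξₖ, rep a ξₖ⟫`. -/
def IsWStarCont (rep : A →⋆ₐ[ℂ] (H →L[ℂ] H)) (μ : A →L[ℂ] ℂ) : Prop :=
  ∃ ξ : ℕ → H, Summable (fun k => ‖ξ k‖ ^ 2) ∧
    ∀ a : A, μ a = ∑' k, inner (𝕜 := ℂ) (ξ k) (rep a (ξ k))

/-- `μ` is weak*-singular with respect to `lam`: no (positive extension of) `μ`
majorizes a non-zero weak*-continuous positive linear functional. -/
def IsWStarSing (rep : A →⋆ₐ[ℂ] (H →L[ℂ] H)) (μ : A →L[ℂ] ℂ) : Prop :=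
  ∀ ν : A →L[ℂ] ℂ, IsPosPLF ν → IsWStarCont rep ν → PLFLe ν μ → ν = 0

omit [CStarRing A] [CompleteSpace A] [StarModule ℂ A] [NormOneClass A] in
theorem PLFLe.trans {ρ ν μ : A →L[ℂ] ℂ} (hρν : PLFLe ρ ν) (hνμ : PLFLe ν μ) : PLFLe ρ μ :=
  fun a => by simpa only [sub_add_sub_cancel] using add_nonneg (hνμ a) (hρν a)

theorem weakStarSingular_hereditary_general
    (rep : A →⋆ₐ[ℂ] (H →L[ℂ] H))
    (μ ν : A →L[ℂ] ℂ)
    (hle : PLFLe ν μ) (hsing : IsWStarSing rep μ) :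
    IsWStarSing rep ν :=
  fun ρ hρ hρcont hρν => hsing ρ hρ hρcont (hρν.trans hle)

/-- The set `WS[lam]` of positive linear functionals on `A`
that are weak*-singular with respect to `lam` is a hereditary cone in the
positive cone of `A*`: if `0 ≤ ν ≤ μ` and `μ ∈ WS[lam]`, then `ν ∈ WS[lam]`. -/
theorem weakStarSingular_hereditary
    (lam : A →L[ℂ] ℂ) (hlam : IsPosPLF lam)
    (rep : A →⋆ₐ[ℂ] (H →L[ℂ] H)) (xi : H) (hGNS : IsGNSRep lam rep xi)
    (μ ν : A →L[ℂ] ℂ) (hμ : IsPosPLF μ) (hν : IsPosPLF ν)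
    (hle : PLFLe ν μ) (hsing : IsWStarSing rep μ) :
    IsWStarSing rep ν :=
  weakStarSingular_hereditary_general rep μ ν hle hsing
end
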